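/- arXiv:2103.06170 — 4 statements merged into one kernel-verified Lean document; each statement's English description precedes it below -/
import Mathlib

section
/- Shared-key consistency of the proposed MP-NIKE scheme: let G be a group, g ∈ G an element whose order divides p*z*q, and let W be a finite nonempty index set with, for each i ∈ W, natural numbers y_i, k_i, public key e_i = p*y_i + z*q*k_i and private key d_i = g^{p*y_i}. Then for every i ∈ W, d_i^{∏_{j∈W, j≠i} e_j} = g^{p^{|W|} * ∏_{j∈W} y_j}. In particular the value is independent of i. -/
/-! The exponent of `g` on the left is `p y_i ∏_{j ≠ i} e_j`, and `e_j ≡ p y_j [MOD z q]`.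
The leading factor `p` lifts this congruence to one modulo `p z q`, the order bound of `g`,
and turns the exponent into `∏_{j ∈ W} p y_j = p ^ |W| ∏_{j ∈ W} y_j`. -/

open Finset

theorem mul_mul_prod_erase_modEq {ι : Type*} [DecidableEq ι] {s : Finset ι} {i : ι} (hi : i ∈ s)
    {m n : ℕ} {a e : ι → ℕ} (he : ∀ j ∈ s, e j ≡ m * a j [MOD n]) :
    m * a i * ∏ j ∈ s.erase i, e j ≡ m ^ s.card * ∏ j ∈ s, a j [MOD m * n] := by
  have hprod : m * ∏ j ∈ s.erase i, e j ≡ m * ∏ j ∈ s.erase i, m * a j [MOD m * n] :=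
    (Nat.ModEq.prod fun j hj => he j (mem_of_mem_erase hj)).mul_left' m
  calc m * a i * ∏ j ∈ s.erase i, e j
      = a i * (m * ∏ j ∈ s.erase i, e j) := by ring
    _ ≡ a i * (m * ∏ j ∈ s.erase i, m * a j) [MOD m * n] := hprod.mul_left _
    _ = ∏ j ∈ s, m * a j := by rw [← mul_prod_erase s (fun j => m * a j) hi]; ring
    _ = m ^ s.card * ∏ j ∈ s, a j := by rw [prod_mul_distrib, prod_const]

theorem pow_mul_pow_prod_erase_eq {G ι : Type*} [Monoid G] [DecidableEq ι] {g : G} {m n : ℕ}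
    (hg : g ^ (m * n) = 1) {s : Finset ι} {i : ι} (hi : i ∈ s) {a e : ι → ℕ}
    (he : ∀ j ∈ s, e j ≡ m * a j [MOD n]) :
    (g ^ (m * a i)) ^ ∏ j ∈ s.erase i, e j = g ^ (m ^ s.card * ∏ j ∈ s, a j) := by
  rw [← pow_mul]
  exact pow_eq_pow_of_modEq (mul_mul_prod_erase_modEq hi he) hg

theorem stmt_6_general (G : Type*) [Group G] (g : G)
    (p z q : ℕ)
    (hg : g ^ (p * z * q) = 1)
    (ι : Type*) [DecidableEq ι] (W : Finset ι)
    (y k : ι → ℕ) (e : ι → ℕ) (d : ι → G)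
    (he : ∀ i ∈ W, e i = p * y i + z * q * k i)
    (hd : ∀ i ∈ W, d i = g ^ (p * y i)) :
    ∀ i ∈ W, (d i) ^ (∏ j ∈ W.erase i, e j) = g ^ (p ^ W.card * ∏ j ∈ W, y j) := by
  intro i hi
  rw [hd i hi]
  refine pow_mul_pow_prod_erase_eq (n := z * q) (by rwa [← mul_assoc]) hi fun j hj => ?_
  rw [he j hj]
  exact Nat.add_modEq_left_iff.mpr (dvd_mul_right _ _)

theorem stmt_6 (G : Type*) [Group G] (g : G)
    (p z q : ℕ) (hp : 0 < p) (hz : 0 < z) (hq : 0 < q)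
    (hg : g ^ (p * z * q) = 1)
    (ι : Type*) [DecidableEq ι] (W : Finset ι) (hW : W.Nonempty)
    (y k : ι → ℕ) (e : ι → ℕ) (d : ι → G)
    (he : ∀ i ∈ W, e i = p * y i + z * q * k i)
    (hd : ∀ i ∈ W, d i = g ^ (p * y i)) :
    ∀ i ∈ W, (d i) ^ (∏ j ∈ W.erase i, e j) = g ^ (p ^ W.card * ∏ j ∈ W, y j) :=
  stmt_6_general G g p z q hg ι W y k e d he hd
end

section
/- Join correctness of the proposed MP-NIKE scheme: let G be a group and g ∈ G with g^{p*z*q} = 1 for positive integers p, z, q. Let F_W = g^{p^m * Y} for some integers m ≥ 1 and Y ≥ 0, and let e_s = p*y_s + z*q*k_s for naturals y_s, k_s. Then F_W^{e_s} = g^{p^{m+1} * Y * y_s}. -/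
theorem stmt_7 (G : Type*) [Group G] (g : G)
    (p z q : ℕ) (hp : 0 < p) (hz : 0 < z) (hq : 0 < q)
    (hg : g ^ (p * z * q) = 1)
    (m Y : ℕ) (hm : 1 ≤ m) (FW : G) (hFW : FW = g ^ (p ^ m * Y))
    (ys ks es : ℕ) (hes : es = p * ys + z * q * ks) :
    FW ^ es = g ^ (p ^ (m + 1) * Y * ys) := by
  subst hFW hes
  obtain ⟨n, rfl⟩ := Nat.exists_eq_add_of_le hm
  rw [← pow_mul]
  have h1 : p ^ (1 + n) * Y * (p * ys + z * q * ks)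
      = p ^ (1 + n + 1) * Y * ys + (p * z * q) * (p ^ n * Y * ks) := by ring
  rw [h1, pow_add, pow_mul g (p * z * q), hg, one_pow, mul_one]
end

section
/- Eskeland shared-key consistency: let N > 1 and let g be a unit of Z/NZ with g^φ = 1 for a positive integer φ. Suppose for each i in a finite set W we have integers z_i, v_i, u with d_i = z_i*u + v_i*φ and public keys e_j satisfying e_j ≡ z_j (mod φ). Then for every i ∈ W, g^{d_i * ∏_{j∈W, j≠i} e_j} = g^{u * ∏_{j∈W} z_j}; in particular the value is independent of i. -/
/-!
Both exponents are congruent modulo `φ`: replacing each `e j` by `z j` and `d i` by `z i * u`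
changes them only by multiples of `φ`, and then `z i * ∏_{j ≠ i} z j = ∏_j z j`. Since
`g ^ φ = 1`, the order of `g` divides `φ`, so congruent exponents give the same power of `g`.
-/

theorem zpow_eq_zpow_of_modEq_of_pow_eq_one {G : Type*} [Group G] {g : G} {n : ℕ}
    (hg : g ^ n = 1) {a b : ℤ} (hab : a ≡ b [ZMOD n]) : g ^ a = g ^ b :=
  zpow_eq_zpow_iff_modEq.mpr <| hab.of_dvd <| Int.natCast_dvd_natCast.mpr <|
    orderOf_dvd_of_pow_eq_one hg

theorem mul_prod_erase_modEq {ι : Type*} [DecidableEq ι] {W : Finset ι} {i : ι} (hi : i ∈ W)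
    {n d u : ℤ} {z e : ι → ℤ} (hd : d ≡ z i * u [ZMOD n])
    (he : ∀ j ∈ W, e j ≡ z j [ZMOD n]) :
    d * ∏ j ∈ W.erase i, e j ≡ u * ∏ j ∈ W, z j [ZMOD n] := by
  have hprod : ∏ j ∈ W.erase i, e j ≡ ∏ j ∈ W.erase i, z j [ZMOD n] :=
    Int.ModEq.prod fun j hj => he j (Finset.mem_of_mem_erase hj)
  calc d * ∏ j ∈ W.erase i, e j ≡ z i * u * ∏ j ∈ W.erase i, z j [ZMOD n] := hd.mul hprod
    _ = u * ∏ j ∈ W, z j := by rw [← Finset.mul_prod_erase W z hi]; ring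

theorem stmt_12_general (N : ℕ) (g : (ZMod N)ˣ)
    (φ : ℕ) (hgφ : g ^ φ = 1)
    (ι : Type*) [DecidableEq ι] (W : Finset ι)
    (z v e d : ι → ℤ) (u : ℤ)
    (hd : ∀ i ∈ W, d i = z i * u + v i * (φ : ℤ))
    (he : ∀ j ∈ W, e j ≡ z j [ZMOD (φ : ℤ)]) :
    ∀ i ∈ W, g ^ (d i * ∏ j ∈ W.erase i, e j) = g ^ (u * ∏ j ∈ W, z j) := by
  intro i hi
  have hdi : d i ≡ z i * u [ZMOD φ] := by
    rw [hd i hi, mul_comm (v i)]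
    exact Int.modEq_add_fac_self
  exact zpow_eq_zpow_of_modEq_of_pow_eq_one hgφ (mul_prod_erase_modEq hi hdi he)

theorem stmt_12 (N : ℕ) (hN : 1 < N) (g : (ZMod N)ˣ)
    (φ : ℕ) (hφ : 0 < φ) (hgφ : g ^ φ = 1)
    (ι : Type*) [DecidableEq ι] (W : Finset ι)
    (z v e d : ι → ℤ) (u : ℤ)
    (hd : ∀ i ∈ W, d i = z i * u + v i * (φ : ℤ))
    (he : ∀ j ∈ W, e j ≡ z j [ZMOD (φ : ℤ)]) :
    ∀ i ∈ W, g ^ (d i * ∏ j ∈ W.erase i, e j) = g ^ (u * ∏ j ∈ W, z j) :=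
  stmt_12_general N g φ hgφ ι W z v e d u hd he
end

section
/- Full collusion attack on Eskeland (end-to-end): let N > 1, g a unit of Z/NZ with g^φ = 1 (φ > 0). Suppose colluding users hold (e_i, d_i) and (e_j, d_j) with d_i = z_i*u + v_i*φ, d_j = z_j*u + v_j*φ, e_i ≡ z_i and e_j ≡ z_j (mod φ), and suppose a*e_i - b*e_j = 1 for integers a, b. Then for any finite set W' of integers z'_k (k ∈ W') congruent mod φ to public keys e'_k, the value g^{(a*d_i - b*d_j) * ∏_{k∈W'} e'_k} equals the group key g^{u * ∏_{k∈W'} z'_k}. -/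
theorem zpow_eq_zpow_of_pow_eq_one {G : Type*} [Group G] {g : G} {n : ℕ} (hg : g ^ n = 1)
    {x y : ℤ} (h : x ≡ y [ZMOD n]) : g ^ x = g ^ y :=
  zpow_eq_zpow_iff_modEq.mpr <|
    h.of_dvd (Int.natCast_dvd_natCast.mpr (orderOf_dvd_of_pow_eq_one hg))

/-- Lemma 3 of the paper: `u` is the master secret and `(eᵢ, dᵢ)`, `(eⱼ, dⱼ)` are the key pairs
of the two colluding users. -/
theorem bezout_combination_modEq_secret {n u zi zj vi vj ei ej di dj a b : ℤ}
    (hdi : di = zi * u + vi * n) (hdj : dj = zj * u + vj * n)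
    (hei : ei ≡ zi [ZMOD n]) (hej : ej ≡ zj [ZMOD n]) (hab : a * ei - b * ej = 1) :
    a * di - b * dj ≡ u [ZMOD n] :=
  calc a * di - b * dj ≡ (a * zi - b * zj) * u [ZMOD n] := by
        refine Int.modEq_iff_dvd.mpr ⟨-(a * vi - b * vj), ?_⟩
        rw [hdi, hdj]; ring
    _ ≡ (a * ei - b * ej) * u [ZMOD n] := by gcongr
    _ = u := by rw [hab, one_mul]

theorem stmt_14_general (N : ℕ) (g : (ZMod N)ˣ)
    (φ : ℕ) (hgφ : g ^ φ = 1)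
    (u zi zj vi vj ei ej di dj a b : ℤ)
    (hdi : di = zi * u + vi * (φ : ℤ)) (hdj : dj = zj * u + vj * (φ : ℤ))
    (hei : ei ≡ zi [ZMOD (φ : ℤ)]) (hej : ej ≡ zj [ZMOD (φ : ℤ)])
    (hab : a * ei - b * ej = 1)
    (ι : Type*) (W' : Finset ι) (z' e' : ι → ℤ)
    (hcong : ∀ k ∈ W', e' k ≡ z' k [ZMOD (φ : ℤ)]) :
    g ^ ((a * di - b * dj) * ∏ k ∈ W', e' k) = g ^ (u * ∏ k ∈ W', z' k) :=
  zpow_eq_zpow_of_pow_eq_one hgφ <|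
    (bezout_combination_modEq_secret hdi hdj hei hej hab).mul (Int.ModEq.prod hcong)

theorem stmt_14 (N : ℕ) (hN : 1 < N) (g : (ZMod N)ˣ)
    (φ : ℕ) (hφ : 0 < φ) (hgφ : g ^ φ = 1)
    (u zi zj vi vj ei ej di dj a b : ℤ)
    (hdi : di = zi * u + vi * (φ : ℤ)) (hdj : dj = zj * u + vj * (φ : ℤ))
    (hei : ei ≡ zi [ZMOD (φ : ℤ)]) (hej : ej ≡ zj [ZMOD (φ : ℤ)])
    (hab : a * ei - b * ej = 1)
    (ι : Type*) (W' : Finset ι) (z' e' : ι → ℤ)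
    (hcong : ∀ k ∈ W', e' k ≡ z' k [ZMOD (φ : ℤ)]) :
    g ^ ((a * di - b * dj) * ∏ k ∈ W', e' k) = g ^ (u * ∏ k ∈ W', z' k) :=
  stmt_14_general N g φ hgφ u zi zj vi vj ei ej di dj a b hdi hdj hei hej hab ι W' z' e' hcong
end
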